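/- arXiv:0804.2031 — 4 statements merged into one kernel-verified Lean document; each statement's English description precedes it below -/
import Mathlib

section
/- Let R be a commutative ring and let D_x, D_y : R → R be two commuting derivations, extended entrywise to matrices over R. Let (A₀,B₀) be a zero-curvature representation, i.e. D_y A₀ - D_x B₀ + A₀·B₀ - B₀·A₀ = 0, and let A₁, B₁ be n×n matrices over R. Then the pair (A₁,B₁) is a cocycle with respect to (A₀,B₀), i.e. D_y A₁ - (B₀·A₁ - A₁·B₀) = D_x B₁ - (A₀·B₁ - B₁·A₀), if and only if the 2n×2n block lower-triangular matrices A⁽¹⁾ = [[A₀, 0],[A₁, A₀]] and B⁽¹⁾ = [[B₀, 0],[B₁, B₀]] constitute a zero-curvature representation: D_y A⁽¹⁾ - D_x B⁽¹⁾ + A⁽¹⁾·B⁽¹⁾ - B⁽¹⁾·A⁽¹⁾ = 0. -/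
/-- A derivation of a commutative ring: an additive map satisfying the Leibniz rule. -/
def IsDeriv {R : Type*} [CommRing R] (D : R → R) : Prop :=
  (∀ a b, D (a + b) = D a + D b) ∧ (∀ a b, D (a * b) = D a * b + a * D b)

/-- `(A₁, B₁)` is a cocycle with respect to a zero-curvature representation `(A₀, B₀)`
if and only if the block lower-triangular matrices
`A⁽¹⁾ = [[A₀,0],[A₁,A₀]]`, `B⁽¹⁾ = [[B₀,0],[B₁,B₀]]`
constitute a zero-curvature representation. -/
theorem cocycle_iff_block_zcr {R : Type*} [CommRing R] {n : ℕ}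
    (Dx Dy : R → R) (hDx : IsDeriv Dx) (hDy : IsDeriv Dy)
    (hcomm : ∀ a, Dx (Dy a) = Dy (Dx a))
    (A₀ B₀ A₁ B₁ : Matrix (Fin n) (Fin n) R)
    (hzcr : A₀.map Dy - B₀.map Dx + (A₀ * B₀ - B₀ * A₀) = 0) :
    (A₁.map Dy - (B₀ * A₁ - A₁ * B₀) = B₁.map Dx - (A₀ * B₁ - B₁ * A₀)) ↔
    ((Matrix.fromBlocks A₀ 0 A₁ A₀).map Dy - (Matrix.fromBlocks B₀ 0 B₁ B₀).map Dx +
      (Matrix.fromBlocks A₀ 0 A₁ A₀ * Matrix.fromBlocks B₀ 0 B₁ B₀ -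
       Matrix.fromBlocks B₀ 0 B₁ B₀ * Matrix.fromBlocks A₀ 0 A₁ A₀) = 0) := by
  have hx0 : Dx 0 = 0 := by have := hDx.1 0 0; simpa using this.symm
  have hy0 : Dy 0 = 0 := by have := hDy.1 0 0; simpa using this.symm
  have hmap0x : (0 : Matrix (Fin n) (Fin n) R).map Dx = 0 := by
    ext i j; simp [Matrix.map_apply, hx0]
  have hmap0y : (0 : Matrix (Fin n) (Fin n) R).map Dy = 0 := by
    ext i j; simp [Matrix.map_apply, hy0]
  have hsub : ∀ (P Q S T P' Q' S' T' : Matrix (Fin n) (Fin n) R),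
      Matrix.fromBlocks P Q S T - Matrix.fromBlocks P' Q' S' T' =
      Matrix.fromBlocks (P - P') (Q - Q') (S - S') (T - T') := by
    intro P Q S T P' Q' S' T'
    rw [sub_eq_add_neg, Matrix.fromBlocks_neg, Matrix.fromBlocks_add]
    simp [sub_eq_add_neg]
  rw [Matrix.fromBlocks_map, Matrix.fromBlocks_map, Matrix.fromBlocks_multiply,
    Matrix.fromBlocks_multiply, hmap0x, hmap0y, hsub, hsub, Matrix.fromBlocks_add,
    ← Matrix.fromBlocks_zero, Matrix.fromBlocks_inj]
  constructor
  · intro h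
    refine ⟨by simpa using hzcr, by simp, ?_, by simpa using hzcr⟩
    linear_combination (norm := abel) h
  · rintro ⟨-, -, h, -⟩
    linear_combination (norm := abel) h
end

section
/- Let R be a commutative ring and let D_x, D_y : R → R be two commuting derivations, extended entrywise to matrices over R. Let (A₀,B₀) be a zero-curvature representation of n×n matrices and let (A₁,B₁) and (A₁',B₁') be two cocycles with respect to (A₀,B₀). Then (A₁,B₁) and (A₁',B₁') are cohomologous (i.e. there exists an n×n matrix S with A₁' - A₁ = D_x S - (A₀·S - S·A₀) and B₁' - B₁ = D_y S - (B₀·S - S·B₀)) if and only if the corresponding 2n×2n block zero-curvature representations A⁽¹⁾ = [[A₀,0],[A₁,A₀]], B⁽¹⁾ = [[B₀,0],[B₁,B₀]] and A'⁽¹⁾ = [[A₀,0],[A₁',A₀]], B'⁽¹⁾ = [[B₀,0],[B₁',B₀]] are gauge equivalent with respect to a gauge matrix of the block lower-triangular form S⁽¹⁾ = [[E,0],[S,E]] with the n×n identity matrix E on the diagonal. -/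
/-- The gauge transformation `A ↦ (D S)·S⁻¹ + S·A·S⁻¹` of a matrix `A`
by an (invertible) matrix `S`, with respect to a derivation `D` extended entrywise. -/
noncomputable def gaugeT {R : Type*} [CommRing R] {m : Type*} [Fintype m] [DecidableEq m]
    (D : R → R) (S A : Matrix m m R) : Matrix m m R :=
  S.map D * S⁻¹ + S * A * S⁻¹

theorem IsDeriv.map_zero {R : Type*} [CommRing R] {D : R → R} (hD : IsDeriv D) : D 0 = 0 := by
  have := hD.1 0 0
  simpa using this

theorem IsDeriv.map_one {R : Type*} [CommRing R] {D : R → R} (hD : IsDeriv D) : D 1 = 0 := by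
  have := hD.2 1 1
  simp only [mul_one, one_mul] at this
  have h : D 1 + D 1 = D 1 + 0 := by rw [add_zero]; exact this.symm
  exact add_left_cancel h

theorem map_one_matrix {R : Type*} [CommRing R] {n : ℕ} {D : R → R} (hD : IsDeriv D) :
    (1 : Matrix (Fin n) (Fin n) R).map D = 0 := by
  ext i j
  by_cases h : i = j <;>
    simp [Matrix.map_apply, Matrix.one_apply, h, hD.map_zero, hD.map_one]

theorem unipotent_inv {R : Type*} [CommRing R] {n : ℕ} (S : Matrix (Fin n) (Fin n) R) :
    (Matrix.fromBlocks (1 : Matrix (Fin n) (Fin n) R) (0 : Matrix (Fin n) (Fin n) R) S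
        (1 : Matrix (Fin n) (Fin n) R))⁻¹
      = Matrix.fromBlocks 1 0 (-S) 1 := by
  apply Matrix.inv_eq_right_inv
  rw [Matrix.fromBlocks_multiply, ← Matrix.fromBlocks_one]
  congr 1 <;> simp

/-- Key computation: gauge transform of a block lower-triangular matrix by a unipotent one. -/
theorem gaugeT_block {R : Type*} [CommRing R] {n : ℕ} {D : R → R} (hD : IsDeriv D)
    (S A C : Matrix (Fin n) (Fin n) R) :
    gaugeT D (Matrix.fromBlocks 1 0 S 1) (Matrix.fromBlocks A 0 C A)
      = Matrix.fromBlocks A 0 (S.map D + (S * A + C) + A * (-S)) A := by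
  unfold gaugeT
  rw [unipotent_inv]
  have hmap : (Matrix.fromBlocks (1 : Matrix (Fin n) (Fin n) R) (0 : Matrix (Fin n) (Fin n) R) S
        (1 : Matrix (Fin n) (Fin n) R)).map D
      = Matrix.fromBlocks 0 0 (S.map D) 0 := by
    have h0 : (0 : Matrix (Fin n) (Fin n) R).map D = 0 := by
      ext i j; simp [Matrix.map_apply, hD.map_zero]
    rw [Matrix.fromBlocks_map, map_one_matrix hD, h0]
  rw [hmap, Matrix.fromBlocks_multiply, Matrix.fromBlocks_multiply,
    Matrix.fromBlocks_multiply, Matrix.fromBlocks_add]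
  congr 1 <;> simp <;> abel

theorem block_eq_iff {R : Type*} [CommRing R] {n : ℕ} (D : R → R)
    (S A C C' : Matrix (Fin n) (Fin n) R) :
    S.map D + (S * A + C) + A * (-S) = C' ↔ C' - C = S.map D - (A * S - S * A) := by
  constructor
  · intro h
    rw [← h]
    simp only [mul_neg]
    abel
  · intro h
    have h2 : C' = C + (S.map D - (A * S - S * A)) := by rw [← h]; abel
    rw [h2]
    simp only [mul_neg]
    abel

/-- Two cocycles `(A₁,B₁)` and `(A₁',B₁')` with respect to a zero-curvature representation
`(A₀,B₀)` are cohomologous (differ by a coboundary) if and only if the corresponding block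
zero-curvature representations `[[A₀,0],[A₁,A₀]], [[B₀,0],[B₁,B₀]]` and
`[[A₀,0],[A₁',A₀]], [[B₀,0],[B₁',B₀]]` are gauge equivalent with respect to a gauge matrix
of the block lower-triangular form `[[E,0],[S,E]]`. -/
theorem cohomologous_iff_block_gauge_equiv {R : Type*} [CommRing R] {n : ℕ}
    (Dx Dy : R → R) (hDx : IsDeriv Dx) (hDy : IsDeriv Dy)
    (hcomm : ∀ a, Dx (Dy a) = Dy (Dx a))
    (A₀ B₀ A₁ B₁ A₁' B₁' : Matrix (Fin n) (Fin n) R)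
    (hzcr : A₀.map Dy - B₀.map Dx + (A₀ * B₀ - B₀ * A₀) = 0)
    (hcoc : A₁.map Dy - (B₀ * A₁ - A₁ * B₀) = B₁.map Dx - (A₀ * B₁ - B₁ * A₀))
    (hcoc' : A₁'.map Dy - (B₀ * A₁' - A₁' * B₀) = B₁'.map Dx - (A₀ * B₁' - B₁' * A₀)) :
    (∃ S : Matrix (Fin n) (Fin n) R,
        A₁' - A₁ = S.map Dx - (A₀ * S - S * A₀) ∧
        B₁' - B₁ = S.map Dy - (B₀ * S - S * B₀)) ↔
    (∃ S : Matrix (Fin n) (Fin n) R,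
        gaugeT Dx (Matrix.fromBlocks 1 0 S 1) (Matrix.fromBlocks A₀ 0 A₁ A₀)
          = Matrix.fromBlocks A₀ 0 A₁' A₀ ∧
        gaugeT Dy (Matrix.fromBlocks 1 0 S 1) (Matrix.fromBlocks B₀ 0 B₁ B₀)
          = Matrix.fromBlocks B₀ 0 B₁' B₀) := by
  have key : ∀ (D : R → R), IsDeriv D → ∀ S A C C' : Matrix (Fin n) (Fin n) R,
      (gaugeT D (Matrix.fromBlocks 1 0 S 1) (Matrix.fromBlocks A 0 C A)
        = Matrix.fromBlocks A 0 C' A) ↔ C' - C = S.map D - (A * S - S * A) := by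
    intro D hD S A C C'
    rw [gaugeT_block hD, Matrix.fromBlocks_inj]
    simp only [and_true, true_and, eq_self_iff_true]
    exact block_eq_iff D S A C C'
  constructor
  · rintro ⟨S, h1, h2⟩
    exact ⟨S, (key Dx hDx S A₀ A₁ A₁').2 h1, (key Dy hDy S B₀ B₁ B₁').2 h2⟩
  · rintro ⟨S, h1, h2⟩
    exact ⟨S, (key Dx hDx S A₀ A₁ A₁').1 h1, (key Dy hDy S B₀ B₁ B₁').1 h2⟩
end

section
/- Let u : ℝ² → ℝ be smooth (coordinates (x,t)) and let λ ∈ ℝ. Define the 2×2 real matrix-valued functions A = [[u, λ],[1, -u]] and B = [[-u_{xx} + 2u³ - 4λu, 2λu_x + 2λu² - 4λ²],[-2u_x + 2u² - 4λ, u_{xx} - 2u³ + 4λu]], where subscripts denote partial derivatives with respect to x. Then at every point, ∂_t A - ∂_x B + A·B - B·A = (u_t + u_{xxx} - 6u²u_x)·C, where C = [[1,0],[0,-1]]. In particular, if u satisfies the mKdV equation u_t + u_{xxx} - 6u²u_x = 0, then A dx + B dt is a zero-curvature representation: ∂_t A - ∂_x B + A·B - B·A = 0. -/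
/-- Partial derivative with respect to the first coordinate `x`. -/
noncomputable def px (f : ℝ × ℝ → ℝ) : ℝ × ℝ → ℝ :=
  fun z => fderiv ℝ f z (1, 0)

/-- Partial derivative with respect to the second coordinate `t`. -/
noncomputable def pt (f : ℝ × ℝ → ℝ) : ℝ × ℝ → ℝ :=
  fun z => fderiv ℝ f z (0, 1)

/-- Entrywise partial `x`-derivative of a matrix-valued function. -/
noncomputable def Mpx (A : ℝ × ℝ → Matrix (Fin 2) (Fin 2) ℝ) :
    ℝ × ℝ → Matrix (Fin 2) (Fin 2) ℝ :=
  fun z => Matrix.of fun i j => px (fun w => A w i j) z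

/-- Entrywise partial `t`-derivative of a matrix-valued function. -/
noncomputable def Mpt (A : ℝ × ℝ → Matrix (Fin 2) (Fin 2) ℝ) :
    ℝ × ℝ → Matrix (Fin 2) (Fin 2) ℝ :=
  fun z => Matrix.of fun i j => pt (fun w => A w i j) z

lemma px_e00 (u f2 : ℝ × ℝ → ℝ) (lam : ℝ) (z : ℝ × ℝ)
    (Hu : HasFDerivAt u (fderiv ℝ u z) z)
    (H2 : HasFDerivAt f2 (fderiv ℝ f2 z) z) :
    px (fun w => -(f2 w) + 2 * (u w) ^ 3 - 4 * lam * u w) z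
      = -(px f2 z) + 6 * (u z) ^ 2 * px u z - 4 * lam * px u z := by
  have hf : (fun w => -(f2 w) + 2 * (u w) ^ 3 - 4 * lam * u w)
      = fun w => -f2 w + 2 * (u w * (u w * u w)) - 4 * lam * u w := by
    funext w; ring
  have h := ((H2.neg.add ((Hu.mul (Hu.mul Hu)).const_mul 2)).sub
      (Hu.const_mul (4 * lam))).fderiv
  simp only [px, hf]
  erw [h]
  simp
  ring

lemma px_e01 (u f1 : ℝ × ℝ → ℝ) (lam : ℝ) (z : ℝ × ℝ)
    (Hu : HasFDerivAt u (fderiv ℝ u z) z)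
    (H1 : HasFDerivAt f1 (fderiv ℝ f1 z) z) :
    px (fun w => 2 * lam * f1 w + 2 * lam * (u w) ^ 2 - 4 * lam ^ 2) z
      = 2 * lam * px f1 z + 4 * lam * u z * px u z := by
  have hf : (fun w => 2 * lam * f1 w + 2 * lam * (u w) ^ 2 - 4 * lam ^ 2)
      = fun w => 2 * lam * f1 w + 2 * lam * (u w * u w) - 4 * lam ^ 2 := by
    funext w; ring
  have h := (((H1.const_mul (2 * lam)).add ((Hu.mul Hu).const_mul (2 * lam))).sub_const
      (4 * lam ^ 2)).fderiv
  simp only [px, hf]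
  erw [h]
  simp
  ring

lemma px_e10 (u f1 : ℝ × ℝ → ℝ) (lam : ℝ) (z : ℝ × ℝ)
    (Hu : HasFDerivAt u (fderiv ℝ u z) z)
    (H1 : HasFDerivAt f1 (fderiv ℝ f1 z) z) :
    px (fun w => -2 * f1 w + 2 * (u w) ^ 2 - 4 * lam) z
      = -2 * px f1 z + 4 * u z * px u z := by
  have hf : (fun w => -2 * f1 w + 2 * (u w) ^ 2 - 4 * lam)
      = fun w => (-2 : ℝ) * f1 w + 2 * (u w * u w) - 4 * lam := by
    funext w; ring
  have h := (((H1.const_mul (-2 : ℝ)).add ((Hu.mul Hu).const_mul 2)).sub_const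
      (4 * lam)).fderiv
  simp only [px, hf]
  erw [h]
  simp
  ring

lemma px_e11 (u f2 : ℝ × ℝ → ℝ) (lam : ℝ) (z : ℝ × ℝ)
    (Hu : HasFDerivAt u (fderiv ℝ u z) z)
    (H2 : HasFDerivAt f2 (fderiv ℝ f2 z) z) :
    px (fun w => f2 w - 2 * (u w) ^ 3 + 4 * lam * u w) z
      = px f2 z - 6 * (u z) ^ 2 * px u z + 4 * lam * px u z := by
  have hf : (fun w => f2 w - 2 * (u w) ^ 3 + 4 * lam * u w)
      = fun w => f2 w - 2 * (u w * (u w * u w)) + 4 * lam * u w := by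
    funext w; ring
  have h := ((H2.sub ((Hu.mul (Hu.mul Hu)).const_mul 2)).add
      (Hu.const_mul (4 * lam))).fderiv
  simp only [px, hf]
  erw [h]
  simp
  ring

lemma pt_neg (u : ℝ × ℝ → ℝ) (z : ℝ × ℝ) : pt (fun w => -u w) z = -pt u z := by
  simp [pt, fderiv_neg]

lemma pt_const (c : ℝ) (z : ℝ × ℝ) : pt (fun _ => c) z = 0 := by
  simp [pt]

/-- For the mKdV matrices `A, B`, the curvature equals the mKdV expression times the
characteristic element `C = diag(1,-1)`; in particular, on solutions of the mKdV
equation `u_t + u_{xxx} - 6u²u_x = 0`, the pair `(A, B)` is a zero-curvature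
representation. -/
theorem mkdv_zcr (u : ℝ × ℝ → ℝ) (hu : ContDiff ℝ (⊤ : ℕ∞) u) (lam : ℝ)
    (A B : ℝ × ℝ → Matrix (Fin 2) (Fin 2) ℝ)
    (hA : A = fun z => !![u z, lam; 1, -u z])
    (hB : B = fun z => !![-(px (px u) z) + 2 * (u z) ^ 3 - 4 * lam * u z,
                          2 * lam * px u z + 2 * lam * (u z) ^ 2 - 4 * lam ^ 2;
                          -2 * px u z + 2 * (u z) ^ 2 - 4 * lam,
                          px (px u) z - 2 * (u z) ^ 3 + 4 * lam * u z]) :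
    (∀ z, Mpt A z - Mpx B z + (A z * B z - B z * A z)
        = (pt u z + px (px (px u)) z - 6 * (u z) ^ 2 * px u z) • !![(1 : ℝ), 0; 0, -1])
    ∧ ((∀ z, pt u z + px (px (px u)) z - 6 * (u z) ^ 2 * px u z = 0) →
        ∀ z, Mpt A z - Mpx B z + (A z * B z - B z * A z) = 0) := by
  have h1 : ContDiff ℝ (⊤ : ℕ∞) (px u) := by
    unfold px; exact (hu.fderiv_right (by simp)).clm_apply contDiff_const
  have h2 : ContDiff ℝ (⊤ : ℕ∞) (px (px u)) := by
    unfold px; exact (h1.fderiv_right (by simp)).clm_apply contDiff_const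
  have key : ∀ z, Mpt A z - Mpx B z + (A z * B z - B z * A z)
      = (pt u z + px (px (px u)) z - 6 * (u z) ^ 2 * px u z) • !![(1 : ℝ), 0; 0, -1] := by
    intro z
    have Hu : HasFDerivAt u (fderiv ℝ u z) z :=
      (hu.differentiable (by simp) z).hasFDerivAt
    have H1 : HasFDerivAt (px u) (fderiv ℝ (px u) z) z :=
      (h1.differentiable (by simp) z).hasFDerivAt
    have H2 : HasFDerivAt (px (px u)) (fderiv ℝ (px (px u)) z) z :=
      (h2.differentiable (by simp) z).hasFDerivAt
    have e00 := px_e00 u (px (px u)) lam z Hu H2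
    have e01 := px_e01 u (px u) lam z Hu H1
    have e10 := px_e10 u (px u) lam z Hu H1
    have e11 := px_e11 u (px (px u)) lam z Hu H2
    have eta : pt (fun w => u w) z = pt u z := rfl
    rw [hA, hB]
    ext i j
    fin_cases i <;> fin_cases j <;>
      simp only [Mpt, Mpx, Matrix.of_apply, Matrix.sub_apply, Matrix.add_apply,
        Matrix.smul_apply, Matrix.mul_apply, Fin.sum_univ_two, smul_eq_mul,
        Fin.mk_zero, Fin.mk_one, Fin.isValue,
        Matrix.cons_val', Matrix.cons_val_zero, Matrix.cons_val_one, Matrix.head_cons,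
        Matrix.empty_val', Matrix.cons_val_fin_one, Matrix.head_fin_const,
        e00, e01, e10, e11, pt_neg, pt_const, eta] <;>
      ring
  exact ⟨key, fun h z => by rw [key z, h z, zero_smul]⟩
end

section
/- Let u, U, W : ℝ² → ℝ be smooth functions of (x,t) satisfying u_t = u_{xx} + u·u_x (the Burgers equation), U_t = U_{xx} + u·U_x + u_x·U (the linearized Burgers equation), W_x = U, and W_t = U_x + u·U. Define U'(x,t) = t·U_x + (1/2)(t·u + x)·U + (1/2)(1 + t·u_x)·W. Then U' again satisfies the linearized Burgers equation: U'_t = U'_{xx} + u·U'_x + u_x·U' at every point. (Thus the t-dependent recursion operator of the Burgers equation is a Bäcklund autotransformation of the linearized equation.) -/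
section helpers
variable {f g : ℝ × ℝ → ℝ} {z v w : ℝ × ℝ}

theorem pd_add (hf : DifferentiableAt ℝ f z) (hg : DifferentiableAt ℝ g z) :
    fderiv ℝ (fun y => f y + g y) z v = fderiv ℝ f z v + fderiv ℝ g z v := by
  rw [fderiv_fun_add hf hg]; rfl

theorem pd_mul (hf : DifferentiableAt ℝ f z) (hg : DifferentiableAt ℝ g z) :
    fderiv ℝ (fun y => f y * g y) z v = fderiv ℝ f z v * g z + f z * fderiv ℝ g z v := by
  rw [fderiv_fun_mul hf hg]; simp; ring

theorem pd_fst : fderiv ℝ (fun y : ℝ × ℝ => y.1) z v = v.1 := by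
  simp [fderiv_fst]

theorem pd_snd : fderiv ℝ (fun y : ℝ × ℝ => y.2) z v = v.2 := by
  simp [fderiv_snd]

theorem pd_const (c : ℝ) : fderiv ℝ (fun _ : ℝ × ℝ => c) z v = 0 := by
  simp

theorem contDiff_pd (hf : ContDiff ℝ (⊤ : ℕ∞) f) (v : ℝ × ℝ) :
    ContDiff ℝ (⊤ : ℕ∞) (fun y => fderiv ℝ f y v) :=
  (hf.fderiv_right (by simp)).clm_apply contDiff_const

theorem pd_comm (hf : ContDiff ℝ (⊤ : ℕ∞) f) (z v w : ℝ × ℝ) :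
    fderiv ℝ (fun y => fderiv ℝ f y v) z w = fderiv ℝ (fun y => fderiv ℝ f y w) z v := by
  have hF : ContDiff ℝ (⊤ : ℕ∞) (fderiv ℝ f) := hf.fderiv_right (by simp)
  have hdF := (hF.differentiable (by simp) z).hasFDerivAt
  have h1 : ∀ q : ℝ × ℝ, fderiv ℝ (fun y => fderiv ℝ f y q) z
      = (ContinuousLinearMap.apply ℝ ℝ q).comp (fderiv ℝ (fderiv ℝ f) z) := by
    intro q
    exact ((ContinuousLinearMap.apply ℝ ℝ q).hasFDerivAt.comp z hdF).fderiv
  rw [h1 v, h1 w]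
  simpa using second_derivative_symmetric
    (fun y => (hf.differentiable (by simp) y).hasFDerivAt) hdF w v
end helpers



theorem px_eq (f : ℝ × ℝ → ℝ) : px f = fun z => fderiv ℝ f z (1, 0) := rfl
theorem pt_eq (f : ℝ × ℝ → ℝ) : pt f = fun z => fderiv ℝ f z (0, 1) := rfl

/-- The `t`-dependent recursion operator of the Burgers equation is a Bäcklund
autotransformation of the linearized Burgers equation: if `u` solves the Burgers
equation, `U` solves the linearized equation and `W` is the potential with
`W_x = U`, `W_t = U_x + uU`, then `U' = tU_x + ½(tu + x)U + ½(1 + tu_x)W` again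
solves the linearized Burgers equation. -/
theorem burgers_recursion (u U W : ℝ × ℝ → ℝ)
    (hu : ContDiff ℝ (⊤ : ℕ∞) u) (hU : ContDiff ℝ (⊤ : ℕ∞) U) (hW : ContDiff ℝ (⊤ : ℕ∞) W)
    (hBurgers : ∀ z, pt u z = px (px u) z + u z * px u z)
    (hLin : ∀ z, pt U z = px (px U) z + u z * px U z + px u z * U z)
    (hWx : ∀ z, px W z = U z)
    (hWt : ∀ z, pt W z = px U z + u z * U z)
    (U' : ℝ × ℝ → ℝ)
    (hU' : U' = fun z => z.2 * px U z + (1 / 2) * (z.2 * u z + z.1) * U z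
        + (1 / 2) * (1 + z.2 * px u z) * W z) :
    ∀ z, pt U' z = px (px U') z + u z * px U' z + px u z * U' z := by
  subst hU'
  simp only [px_eq, pt_eq] at hBurgers hLin hWx hWt ⊢
  intro z
  have hu1 : ContDiff ℝ (⊤ : ℕ∞) (fun y => fderiv ℝ u y ((1:ℝ), (0:ℝ))) := contDiff_pd hu _
  have hu2 : ContDiff ℝ (⊤ : ℕ∞)
      (fun y => fderiv ℝ (fun y => fderiv ℝ u y ((1:ℝ), (0:ℝ))) y ((1:ℝ), (0:ℝ))) :=
    contDiff_pd hu1 _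
  have hU1 : ContDiff ℝ (⊤ : ℕ∞) (fun y => fderiv ℝ U y ((1:ℝ), (0:ℝ))) := contDiff_pd hU _
  have hU2 : ContDiff ℝ (⊤ : ℕ∞)
      (fun y => fderiv ℝ (fun y => fderiv ℝ U y ((1:ℝ), (0:ℝ))) y ((1:ℝ), (0:ℝ))) :=
    contDiff_pd hU1 _
  have du : Differentiable ℝ u := hu.differentiable (by simp)
  have dU : Differentiable ℝ U := hU.differentiable (by simp)
  have dW : Differentiable ℝ W := hW.differentiable (by simp)
  have du1 : Differentiable ℝ (fun y => fderiv ℝ u y ((1:ℝ), (0:ℝ))) := hu1.differentiable (by simp)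
  have du2 : Differentiable ℝ
      (fun y => fderiv ℝ (fun y => fderiv ℝ u y ((1:ℝ), (0:ℝ))) y ((1:ℝ), (0:ℝ))) :=
    hu2.differentiable (by simp)
  have dU1 : Differentiable ℝ (fun y => fderiv ℝ U y ((1:ℝ), (0:ℝ))) := hU1.differentiable (by simp)
  have dU2 : Differentiable ℝ
      (fun y => fderiv ℝ (fun y => fderiv ℝ U y ((1:ℝ), (0:ℝ))) y ((1:ℝ), (0:ℝ))) :=
    hU2.differentiable (by simp)
  have hcommU : fderiv ℝ (fun y => fderiv ℝ U y ((1:ℝ), (0:ℝ))) z ((0:ℝ), (1:ℝ))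
      = fderiv ℝ (fun y => fderiv ℝ U y ((0:ℝ), (1:ℝ))) z ((1:ℝ), (0:ℝ)) := pd_comm hU z _ _
  have hcommu : fderiv ℝ (fun y => fderiv ℝ u y ((1:ℝ), (0:ℝ))) z ((0:ℝ), (1:ℝ))
      = fderiv ℝ (fun y => fderiv ℝ u y ((0:ℝ), (1:ℝ))) z ((1:ℝ), (0:ℝ)) := pd_comm hu z _ _
  simp (disch := fun_prop) only [pd_add, pd_mul, pd_fst, pd_snd, pd_const, hcommU, hcommu,
    hBurgers, hLin, hWx, hWt]
  ring
end
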